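/- Let S ∈ RatFunc ℂ and let n ≥ 1. Then 𝔉^{(n)}(S) = 0 and 𝔉^{(n−1)}(S) ≠ 0 if and only if a_k(S) = 0 for every integer k ≡ 2^n − 1 (mod 2^n) and there exists an integer k ≡ 2^{n−1} − 1 (mod 2^n) with a_k(S) ≠ 0. In particular, for every n ≥ 1 there exists a rational function that vanishes after exactly n applications of 𝔉. -/

import Mathlib

/-! Iterating gives `a_j(𝔉^{(p)} S) = a_{2^p j + 2^p - 1}(S)`, and a rational function vanishes iff
its Laurent expansion does. Hence `𝔉^{(n)} S = 0` says that `a_k(S)` vanishes on the class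
`k ≡ -1 (mod 2^n)`, while `𝔉^{(n-1)} S ≠ 0` asks for a nonzero `a_k(S)` on the class
`k ≡ -1 (mod 2^{n-1})`, which splits into the classes `2^n - 1` and `2^{n-1} - 1` modulo `2^n`.
The monomial `X^{2^{n-1} - 1}` has its only nonzero coefficient in the second class. -/

/-- The `n`-th coefficient of the Laurent expansion at `0` of a rational function. -/
noncomputable def coeffL (R : RatFunc ℂ) (n : ℤ) : ℂ :=
  ((R : LaurentSeries ℂ)).coeff n

theorem eq_zero_iff_forall_coeffL_eq_zero {R : RatFunc ℂ} : R = 0 ↔ ∀ k, coeffL R k = 0 := by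
  refine ⟨fun h k => by simp [h, coeffL], fun h => ?_⟩
  have hR : (R : LaurentSeries ℂ) = 0 := HahnSeries.ext (funext h)
  exact (map_eq_zero_iff _ (RingHom.injective _)).mp hR

theorem coeffL_X_pow (m : ℕ) (k : ℤ) :
    coeffL (RatFunc.X ^ m) k = if k = m then 1 else 0 := by
  rw [coeffL, map_pow, RatFunc.coe_X, HahnSeries.single_pow]
  simp [HahnSeries.coeff_single]

theorem Int.forall_modEq_imp_iff {N r : ℤ} {P : ℤ → Prop} :
    (∀ k, k ≡ r [ZMOD N] → P k) ↔ ∀ j, P (N * j + r) := by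
  refine ⟨fun h j => h _ ?_, fun h k hk => ?_⟩
  · simp [Int.ModEq]
  · obtain ⟨j, rfl⟩ := Int.modEq_iff_add_fac.mp hk.symm
    simpa [add_comm] using h j

theorem Int.exists_modEq_and_iff {N r : ℤ} {P : ℤ → Prop} :
    (∃ k, k ≡ r [ZMOD N] ∧ P k) ↔ ∃ j, P (N * j + r) := by
  refine ⟨fun ⟨k, hk, hP⟩ => ?_, fun ⟨j, hj⟩ => ⟨_, ?_, hj⟩⟩
  · obtain ⟨j, rfl⟩ := Int.modEq_iff_add_fac.mp hk.symm
    exact ⟨j, by rwa [add_comm]⟩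
  · simp [Int.ModEq]

section CoefficientMap

variable {F : RatFunc ℂ → RatFunc ℂ}

theorem coeffL_iterate (hF : ∀ R k, coeffL (F R) k = coeffL R (2 * k + 1))
    (m : ℕ) (S : RatFunc ℂ) (k : ℤ) :
    coeffL (F^[m] S) k = coeffL S (2 ^ m * k + (2 ^ m - 1)) := by
  induction m generalizing k with
  | zero => simp
  | succ m ih =>
    rw [Function.iterate_succ_apply', hF, ih]
    ring_nf

theorem apply_eq_zero_and_ne_zero_iff (hF : ∀ R k, coeffL (F R) k = coeffL R (2 * k + 1))
    (R : RatFunc ℂ) :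
    F R = 0 ∧ R ≠ 0 ↔ (∀ j, coeffL R (2 * j + 1) = 0) ∧ ∃ j, coeffL R (2 * j) ≠ 0 := by
  simp only [ne_eq, eq_zero_iff_forall_coeffL_eq_zero, hF, not_forall]
  refine and_congr_right fun hodd => ⟨fun ⟨k, hk⟩ => ?_, fun ⟨j, hj⟩ => ⟨_, hj⟩⟩
  obtain ⟨j, rfl | rfl⟩ := Int.even_or_odd' k
  · exact ⟨j, hk⟩
  · exact absurd (hodd j) hk

theorem iterate_succ_eq_zero_and_iterate_ne_zero_iff
    (hF : ∀ R k, coeffL (F R) k = coeffL R (2 * k + 1)) (m : ℕ) (S : RatFunc ℂ) :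
    F^[m + 1] S = 0 ∧ F^[m] S ≠ 0 ↔
      (∀ j, coeffL S (2 ^ (m + 1) * j + (2 ^ (m + 1) - 1)) = 0) ∧
        ∃ j, coeffL S (2 ^ (m + 1) * j + (2 ^ m - 1)) ≠ 0 := by
  have hodd (j : ℤ) : (2 : ℤ) ^ m * (2 * j + 1) + (2 ^ m - 1) =
      2 ^ (m + 1) * j + (2 ^ (m + 1) - 1) := by ring
  have heven (j : ℤ) : (2 : ℤ) ^ m * (2 * j) + (2 ^ m - 1) = 2 ^ (m + 1) * j + (2 ^ m - 1) := by
    ring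
  rw [Function.iterate_succ_apply', apply_eq_zero_and_ne_zero_iff hF]
  simp only [coeffL_iterate hF, hodd, heven]

end CoefficientMap

theorem stmt_2 (F : RatFunc ℂ → RatFunc ℂ)
    (hF : ∀ R : RatFunc ℂ, ∀ k : ℤ, coeffL (F R) k = coeffL R (2 * k + 1))
    (n : ℕ) (hn : 1 ≤ n) :
    (∀ S : RatFunc ℂ,
      (F^[n] S = 0 ∧ F^[n - 1] S ≠ 0) ↔
        ((∀ k : ℤ, k ≡ 2 ^ n - 1 [ZMOD (2 ^ n : ℤ)] → coeffL S k = 0) ∧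
          ∃ k : ℤ, k ≡ 2 ^ (n - 1) - 1 [ZMOD (2 ^ n : ℤ)] ∧ coeffL S k ≠ 0)) ∧
    ∃ S : RatFunc ℂ, F^[n] S = 0 ∧ F^[n - 1] S ≠ 0 := by
  obtain ⟨m, rfl⟩ := Nat.exists_eq_add_of_le' hn
  simp only [Nat.add_sub_cancel, Int.forall_modEq_imp_iff, Int.exists_modEq_and_iff]
  refine ⟨iterate_succ_eq_zero_and_iterate_ne_zero_iff hF m, RatFunc.X ^ (2 ^ m - 1),
    (iterate_succ_eq_zero_and_iterate_ne_zero_iff hF m _).mpr ⟨fun j => ?_, 0, ?_⟩⟩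
  all_goals
    rw [coeffL_X_pow, Nat.cast_sub Nat.one_le_two_pow]
    push_cast
  · refine if_neg fun h => ?_
    have h2m : (2 : ℤ) ^ m * (2 * j + 1) = 0 := by linear_combination h
    rcases mul_eq_zero.mp h2m with hpow | hodd
    · exact pow_ne_zero m two_ne_zero hpow
    · omega
  · simp
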